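/- arXiv:2508.06661 — 2 statements merged into one kernel-verified Lean document; each statement's English description precedes it below -/
import Mathlib

section
/- Under the setup of the approximate Bellman operator, the sequence v^{k+1} = T^δ v^k satisfies ψ(v^k) ≤ γ^k ψ(v^0) + 2(1+γ)δ(1-γ^k)/(1-γ) for all k ∈ ℕ, and in particular ψ(v^k) ≤ γ^k ψ(v^0) + 2(1+γ)δ/(1-γ). -/
/-! Each step of approximate value iteration shrinks the residual by the factor γ up to an
additive error 2δ (one δ from each of the two approximate applications of the operator), and
unrolling the affine recursion `x (k + 1) ≤ γ * x k + b` gives the geometric bound. -/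

theorem dist_apply_apply_le_of_approx_contraction {X : Type*} [PseudoMetricSpace X]
    {T Tδ : X → X} {γ δ : ℝ} (hT : ∀ x y, dist (T x) (T y) ≤ γ * dist x y)
    (happrox : ∀ x, dist (Tδ x) (T x) ≤ δ) (x : X) :
    dist (Tδ (Tδ x)) (Tδ x) ≤ γ * dist (Tδ x) x + 2 * δ := by
  calc dist (Tδ (Tδ x)) (Tδ x)
      ≤ dist (Tδ (Tδ x)) (T (Tδ x)) + dist (T (Tδ x)) (T x) + dist (T x) (Tδ x) :=
        dist_triangle4 _ _ _ _
    _ ≤ δ + γ * dist (Tδ x) x + δ := by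
        gcongr
        exacts [happrox _, hT _ _, dist_comm (T x) (Tδ x) ▸ happrox x]
    _ = γ * dist (Tδ x) x + 2 * δ := by ring

theorem le_pow_mul_add_geom_of_le_mul_add {x : ℕ → ℝ} {γ b : ℝ} (hγ0 : 0 ≤ γ) (hγ1 : γ ≠ 1)
    (h : ∀ k, x (k + 1) ≤ γ * x k + b) (k : ℕ) :
    x k ≤ γ ^ k * x 0 + b * (1 - γ ^ k) / (1 - γ) := by
  have hγ1' : 1 - γ ≠ 0 := sub_ne_zero.2 hγ1.symm
  induction k with
  | zero => simp
  | succ k ih =>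
    calc x (k + 1) ≤ γ * x k + b := h k
      _ ≤ γ * (γ ^ k * x 0 + b * (1 - γ ^ k) / (1 - γ)) + b := by gcongr
      _ = γ ^ (k + 1) * x 0 + b * (1 - γ ^ (k + 1)) / (1 - γ) := by
        field_simp
        ring

theorem approx_vi_residual_bound_general
    {S : Type*} [Fintype S]
    (γ δ : ℝ) (hγ0 : 0 < γ) (hγ1 : γ < 1) (hδ : 0 ≤ δ)
    (Tstar Tδ : (S → ℝ) → (S → ℝ))
    (hT : ∀ u v : S → ℝ, ‖Tstar u - Tstar v‖ ≤ γ * ‖u - v‖)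
    (happrox : ∀ v : S → ℝ, ‖Tδ v - Tstar v‖ ≤ δ)
    (v : ℕ → (S → ℝ)) (hv : ∀ k : ℕ, v (k + 1) = Tδ (v k)) :
    ∀ k : ℕ,
      ‖Tδ (v k) - v k‖ ≤
          γ ^ k * ‖Tδ (v 0) - v 0‖ + 2 * (1 + γ) * δ * (1 - γ ^ k) / (1 - γ)
      ∧ ‖Tδ (v k) - v k‖ ≤
          γ ^ k * ‖Tδ (v 0) - v 0‖ + 2 * (1 + γ) * δ / (1 - γ) := by
  have hstep : ∀ k, ‖Tδ (v (k + 1)) - v (k + 1)‖ ≤ γ * ‖Tδ (v k) - v k‖ + 2 * (1 + γ) * δ := by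
    intro k
    have h := dist_apply_apply_le_of_approx_contraction (T := Tstar) (Tδ := Tδ)
      (by simpa only [dist_eq_norm] using hT) (by simpa only [dist_eq_norm] using happrox) (v k)
    rw [hv k]
    simp only [dist_eq_norm] at h
    linarith [mul_nonneg hγ0.le hδ]
  intro k
  have hbound := le_pow_mul_add_geom_of_le_mul_add (x := fun k ↦ ‖Tδ (v k) - v k‖)
    hγ0.le hγ1.ne hstep k
  refine ⟨hbound, hbound.trans (add_le_add_right (div_le_div_of_nonneg_right ?_ ?_) _)⟩
  · exact mul_le_of_le_one_right (by positivity) (sub_le_self _ (by positivity))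
  · linarith

theorem approx_vi_residual_bound
    {S : Type*} [Fintype S] [Nonempty S]
    (γ δ : ℝ) (hγ0 : 0 < γ) (hγ1 : γ < 1) (hδ : 0 ≤ δ)
    (Tstar Tδ : (S → ℝ) → (S → ℝ))
    (hT : ∀ u v : S → ℝ, ‖Tstar u - Tstar v‖ ≤ γ * ‖u - v‖)
    (happrox : ∀ v : S → ℝ, ‖Tδ v - Tstar v‖ ≤ δ)
    (v : ℕ → (S → ℝ)) (hv : ∀ k : ℕ, v (k + 1) = Tδ (v k)) :
    ∀ k : ℕ,
      ‖Tδ (v k) - v k‖ ≤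
          γ ^ k * ‖Tδ (v 0) - v 0‖ + 2 * (1 + γ) * δ * (1 - γ ^ k) / (1 - γ)
      ∧ ‖Tδ (v k) - v k‖ ≤
          γ ^ k * ‖Tδ (v 0) - v 0‖ + 2 * (1 + γ) * δ / (1 - γ) :=
  approx_vi_residual_bound_general γ δ hγ0 hγ1 hδ Tstar Tδ hT happrox v hv
end

section
/- In Example 4.1 with v^0 = 0, γ = 3/5, and the Newton direction d^1 = (3/4 - √2/2, -5/4, 5/4) (computed using the minimizer policy σ(s1)=b1), the function g(α) = ψ₂(v^0 + α d^1)² - ψ₂(v^0)² equals ((3√2-4)/2)α + ((13-6√2)/4)α² for α ∈ (0,1], which is strictly positive for all α ∈ (0,1]. Hence no step size along d^1 decreases the squared L₂ Bellman residual. -/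
/-- Bellman equilibrium operator of the Markov game in Example 4.1 with γ = 3/5. -/
noncomputable def TstarEx (v : Fin 3 → ℝ) : Fin 3 → ℝ :=
  ![min (-(Real.sqrt 2) / 2 + (3 / 5) * v 2) (-(Real.sqrt 2) / 2 + (3 / 5) * v 1),
    -1 / 2 + (3 / 5) * v 1,
    1 / 2 + (3 / 5) * v 2]

/-- The squared L₂ Bellman residual. -/
noncomputable def psi2sq (v : Fin 3 → ℝ) : ℝ :=
  ∑ s : Fin 3, (TstarEx v s - v s) ^ 2

/-- The Newton direction computed with the minimizer policy σ(s1) = b1. -/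
noncomputable def dEx : Fin 3 → ℝ :=
  ![3 / 4 - Real.sqrt 2 / 2, -5 / 4, 5 / 4]

/-! Along `d¹` we have `v₂ ≤ v₃`, so the minimizer at `s₁` moves to `s₂` and `ψ₂²` becomes a
quadratic polynomial in `α`; its coefficients `(3√2 - 4)/2` and `(13 - 6√2)/4` are positive
because `4/3 < √2 < 13/6`. -/

lemma psi2sq_of_le {v : Fin 3 → ℝ} (h : v 1 ≤ v 2) :
    psi2sq v = (-(Real.sqrt 2) / 2 + 3 / 5 * v 1 - v 0) ^ 2
      + (-1 / 2 + 3 / 5 * v 1 - v 1) ^ 2 + (1 / 2 + 3 / 5 * v 2 - v 2) ^ 2 := by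
  have hmin : min (-(Real.sqrt 2) / 2 + 3 / 5 * v 2) (-(Real.sqrt 2) / 2 + 3 / 5 * v 1)
      = -(Real.sqrt 2) / 2 + 3 / 5 * v 1 := min_eq_right (by linarith)
  simp only [psi2sq, TstarEx, Fin.sum_univ_three, Matrix.cons_val_zero, Matrix.cons_val_one,
    Matrix.cons_val_two, Matrix.head_cons, Matrix.tail_cons, hmin]

lemma psi2sq_zero : psi2sq 0 = 1 := by
  rw [psi2sq_of_le le_rfl]
  simp only [Pi.zero_apply, mul_zero, add_zero, sub_zero, div_pow, neg_sq,
    Real.sq_sqrt zero_le_two]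
  norm_num

lemma psi2sq_smul_dEx {α : ℝ} (hα : 0 ≤ α) :
    psi2sq (α • dEx) = 1 + ((3 * Real.sqrt 2 - 4) / 2 * α
      + (13 - 6 * Real.sqrt 2) / 4 * α ^ 2) := by
  have hle : (α • dEx) 1 ≤ (α • dEx) 2 := by
    simp only [dEx, Pi.smul_apply, smul_eq_mul, Matrix.cons_val]
    linarith
  rw [psi2sq_of_le hle]
  simp only [dEx, Pi.smul_apply, smul_eq_mul, Matrix.cons_val]
  linear_combination (α - 1) ^ 2 / 4 * Real.sq_sqrt (zero_le_two : (0 : ℝ) ≤ 2)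

lemma residual_gain_pos {α : ℝ} (hα : 0 < α) :
    0 < (3 * Real.sqrt 2 - 4) / 2 * α + (13 - 6 * Real.sqrt 2) / 4 * α ^ 2 := by
  have hsq : Real.sqrt 2 ^ 2 = 2 := Real.sq_sqrt zero_le_two
  have hlower : 4 / 3 < Real.sqrt 2 := by nlinarith [Real.sqrt_nonneg 2]
  have hupper : Real.sqrt 2 < 13 / 6 := by nlinarith [Real.sqrt_nonneg 2]
  have hlin : 0 < 3 * Real.sqrt 2 - 4 := by linarith
  have hquad : 0 < 13 - 6 * Real.sqrt 2 := by linarith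
  positivity

theorem ft_no_descent_step :
    ∀ α : ℝ, 0 < α → α ≤ 1 →
      psi2sq ((0 : Fin 3 → ℝ) + α • dEx) - psi2sq 0 =
          (3 * Real.sqrt 2 - 4) / 2 * α + (13 - 6 * Real.sqrt 2) / 4 * α ^ 2
      ∧ 0 < psi2sq ((0 : Fin 3 → ℝ) + α • dEx) - psi2sq 0 := by
  intro α hα _
  have hgain : psi2sq ((0 : Fin 3 → ℝ) + α • dEx) - psi2sq 0 =
      (3 * Real.sqrt 2 - 4) / 2 * α + (13 - 6 * Real.sqrt 2) / 4 * α ^ 2 := by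
    rw [zero_add, psi2sq_smul_dEx hα.le, psi2sq_zero]
    ring
  exact ⟨hgain, hgain ▸ residual_gain_pos hα⟩
end
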